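/- If v is a polynomial of degree ≤ p+1 on ℝ³, then curl(grad v) = 0 and grad v belongs to the Nédélec space W¹_p; conversely every curl-free element of W¹_p is a gradient of a polynomial of degree ≤ p+1. -/

import Mathlib

open MeasureTheory

/-- Partial derivative of a scalar function on ℝ³. -/
noncomputable def pd3 (f : (Fin 3 → ℝ) → ℝ) (i : Fin 3) (x : Fin 3 → ℝ) : ℝ :=
  fderiv ℝ f x (Pi.single i 1)

/-- Curl of a vector field on ℝ³. -/
noncomputable def curl3 (u : (Fin 3 → ℝ) → (Fin 3 → ℝ)) (x : Fin 3 → ℝ) : Fin 3 → ℝ :=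
  ![pd3 (fun y => u y 2) 1 x - pd3 (fun y => u y 1) 2 x,
    pd3 (fun y => u y 0) 2 x - pd3 (fun y => u y 2) 0 x,
    pd3 (fun y => u y 1) 0 x - pd3 (fun y => u y 0) 1 x]

/-- Divergence of a vector field on ℝ³. -/
noncomputable def div3 (u : (Fin 3 → ℝ) → (Fin 3 → ℝ)) (x : Fin 3 → ℝ) : ℝ :=
  ∑ i, pd3 (fun y => u y i) i x

/-- Gradient of a scalar field on ℝ³. -/
noncomputable def grad3 (f : (Fin 3 → ℝ) → ℝ) (x : Fin 3 → ℝ) : Fin 3 → ℝ :=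
  fun i => pd3 f i x

/-- Cross product in ℝ³. -/
def cross3 (a b : Fin 3 → ℝ) : Fin 3 → ℝ :=
  ![a 1 * b 2 - a 2 * b 1, a 2 * b 0 - a 0 * b 2, a 0 * b 1 - a 1 * b 0]

/-- Euclidean dot product in ℝ³. -/
def dot3 (a b : Fin 3 → ℝ) : ℝ := ∑ i, a i * b i

/-- `f` is (given by) a polynomial of total degree ≤ p. -/
def IsPoly3 (p : ℕ) (f : (Fin 3 → ℝ) → ℝ) : Prop :=
  ∃ q : MvPolynomial (Fin 3) ℝ, q.totalDegree ≤ p ∧ ∀ x, f x = MvPolynomial.eval x q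

/-- Vector field whose components are polynomials of total degree ≤ p. -/
def IsPolyVec3 (p : ℕ) (u : (Fin 3 → ℝ) → (Fin 3 → ℝ)) : Prop :=
  ∀ i, IsPoly3 p (fun x => u x i)

/-- First-family Nédélec space of degree p (as a set of vector fields). -/
def NedelecW1 (p : ℕ) : Set ((Fin 3 → ℝ) → (Fin 3 → ℝ)) :=
  {v | ∃ P Q, IsPolyVec3 p P ∧ IsPolyVec3 p Q ∧ ∀ x, v x = P x + cross3 (Q x) x}

/-- Face-element (second family) space of degree p. -/
def NedelecW2 (p : ℕ) : Set ((Fin 3 → ℝ) → (Fin 3 → ℝ)) :=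
  {v | ∃ P q, IsPolyVec3 p P ∧ IsPoly3 p q ∧ ∀ x, v x = P x + q x • x}

/-- Poincaré lifting with center a. -/
noncomputable def Rlift (a : Fin 3 → ℝ) (u : (Fin 3 → ℝ) → (Fin 3 → ℝ))
    (x : Fin 3 → ℝ) : Fin 3 → ℝ :=
  cross3 (∫ t in (0:ℝ)..1, t • u (a + t • (x - a))) (x - a)

/-- Degree-2 Poincaré lifting with center a. -/
noncomputable def Dlift (a : Fin 3 → ℝ) (u : (Fin 3 → ℝ) → ℝ)
    (x : Fin 3 → ℝ) : Fin 3 → ℝ :=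
  (∫ t in (0:ℝ)..1, t ^ 2 * u (a + t • (x - a))) • (x - a)

/-!
A gradient of a polynomial of degree `≤ p + 1` has components of degree `≤ p`, and it is
curl-free because partial derivatives of polynomials commute.

Conversely, let `u = P + Q × x` be curl-free, with polynomial components `r i`. Then
`x · u = x · P` has degree `≤ p + 1`, and the symmetry `∂ᵢ r j = ∂ⱼ r i` gives
`∂ⱼ (x · u) = (1 + E) (r j)`, where `E = ∑ i, xᵢ ∂ᵢ` is the Euler operator. Since `E` multiplies
every monomial by its degree, dividing each coefficient of `x · u` by the degree of its monomial
produces a potential `f` with `∂ⱼ f = r j` and `deg f ≤ deg (x · u) ≤ p + 1`.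
-/

namespace MvPolynomial

variable {σ R : Type*}

theorem pderiv_pderiv_comm [CommRing R] (i j : σ) (q : MvPolynomial σ R) :
    pderiv i (pderiv j q) = pderiv j (pderiv i q) := by
  classical
  have hcomm : ⁅pderiv i, pderiv j⁆ = (0 : Derivation R (MvPolynomial σ R) (MvPolynomial σ R)) :=
    derivation_ext fun k => by
      rw [Derivation.commutator_apply, pderiv_X, pderiv_X]
      simp [Pi.single_apply, apply_ite]
  have := congr($hcomm q)
  rwa [Derivation.commutator_apply, Derivation.zero_apply, sub_eq_zero] at this

section CommSemiring

variable [CommSemiring R]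

theorem totalDegree_pderiv_le (i : σ) (q : MvPolynomial σ R) :
    (pderiv i q).totalDegree ≤ q.totalDegree - 1 := by
  refine Finset.sup_le fun m hm => ?_
  have hq : m + Finsupp.single i 1 ∈ q.support := by
    rw [mem_support_iff, coeff_pderiv] at hm
    exact mem_support_iff.mpr (left_ne_zero_of_mul hm)
  have := le_totalDegree hq
  rw [Finsupp.sum_add_index' (fun _ => rfl) (fun _ _ _ => rfl), Finsupp.sum_single_index rfl]
    at this
  omega

theorem coeff_X_mul_pderiv (i : σ) (q : MvPolynomial σ R) (m : σ →₀ ℕ) :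
    coeff m (X i * pderiv i q) = m i * coeff m q := by
  induction q using MvPolynomial.induction_on' with
  | monomial s a =>
    classical
    rw [X_mul_pderiv_monomial, coeff_smul, coeff_monomial]
    split_ifs with h <;> simp [h, nsmul_eq_mul]
  | add f g hf hg => simp only [map_add, mul_add, coeff_add, hf, hg]

variable [Fintype σ]

theorem coeff_sum_X_mul_pderiv (q : MvPolynomial σ R) (m : σ →₀ ℕ) :
    coeff m (∑ i, X i * pderiv i q) = m.degree * coeff m q := by
  simp only [coeff_sum, coeff_X_mul_pderiv, ← Finset.sum_mul, Finsupp.degree_eq_sum, Nat.cast_sum]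

theorem pderiv_sum_X_mul (r : σ → MvPolynomial σ R) (j : σ) :
    pderiv j (∑ i, X i * r i) = r j + ∑ i, X i * pderiv j (r i) := by
  classical
  simp [pderiv_X, Finset.sum_add_distrib, Pi.single_apply, add_comm]

theorem totalDegree_sum_X_mul_le {r : σ → MvPolynomial σ R} {n : ℕ}
    (hr : ∀ i, (r i).totalDegree ≤ n) : (∑ i, X i * r i).totalDegree ≤ n + 1 :=
  totalDegree_finsetSum_le fun i _ =>
    calc (X i * r i).totalDegree ≤ (X i : MvPolynomial σ R).totalDegree + (r i).totalDegree :=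
          totalDegree_mul _ _
      _ ≤ 1 + n := add_le_add ((totalDegree_monomial_le _ _).trans (by simp)) (hr i)
      _ = n + 1 := add_comm _ _

end CommSemiring

section EulerInv

variable {K : Type*} [Field K]

/-- A right inverse of the Euler operator `∑ i, X i * pderiv i` on polynomials without constant
term: the coefficient of `X^m` is divided by `|m|` (which sends the constant term to `0`). -/
noncomputable def eulerInv (g : MvPolynomial σ K) : MvPolynomial σ K :=
  ∑ m ∈ g.support, monomial m (coeff m g / m.degree)

theorem coeff_eulerInv (g : MvPolynomial σ K) (m : σ →₀ ℕ) :
    coeff m (eulerInv g) = coeff m g / m.degree := by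
  classical
  simp only [eulerInv, coeff_sum, coeff_monomial, Finset.sum_ite_eq', mem_support_iff, ne_eq,
    ite_not, ite_eq_right_iff]
  intro h
  simp [h]

theorem totalDegree_eulerInv_le (g : MvPolynomial σ K) :
    (eulerInv g).totalDegree ≤ g.totalDegree :=
  totalDegree_finsetSum_le fun _ hm => (totalDegree_monomial_le _ _).trans (le_totalDegree hm)

theorem pderiv_eulerInv_sum_X_mul [Fintype σ] [CharZero K] {r : σ → MvPolynomial σ K}
    (hr : ∀ i j, pderiv i (r j) = pderiv j (r i)) (j : σ) :
    pderiv j (eulerInv (∑ i, X i * r i)) = r j := by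
  ext m
  have hEuler : coeff m (pderiv j (∑ i, X i * r i)) = (m.degree + 1) * coeff m (r j) := by
    rw [pderiv_sum_X_mul, Finset.sum_congr rfl fun i _ => by rw [hr j i], coeff_add,
      coeff_sum_X_mul_pderiv]
    ring
  have hdeg : ((m + Finsupp.single j 1).degree : K) = m.degree + 1 := by simp
  rw [coeff_pderiv] at hEuler
  rw [coeff_pderiv, coeff_eulerInv, hdeg, div_mul_eq_mul_div, hEuler,
    mul_div_cancel_left₀ _ (Nat.cast_add_one_ne_zero _)]

end EulerInv

section Calculus

variable {𝕜 : Type*} [NontriviallyNormedField 𝕜] [CompleteSpace 𝕜] [Fintype σ]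

theorem fderiv_eval_apply (q : MvPolynomial σ 𝕜) (x v : σ → 𝕜) :
    fderiv 𝕜 (fun y => eval y q) x v = ∑ i, eval x (pderiv i q) * v i := by
  have hd (p : MvPolynomial σ 𝕜) : DifferentiableAt 𝕜 (fun y => eval y p) x :=
    (AnalyticOnNhd.eval_mvPolynomial p x trivial).differentiableAt
  induction q using MvPolynomial.induction_on with
  | C a => simp
  | add f g hf hg =>
    simp only [eval_add]
    rw [fderiv_fun_add (hd f) (hd g)]
    simp only [add_apply, hf, hg, map_add, add_mul, Finset.sum_add_distrib]
  | mul_X f j hf =>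
    classical
    simp only [eval_mul, eval_X]
    rw [fderiv_fun_mul (hd f) (differentiableAt_apply j x), (hasFDerivAt_apply j x).fderiv]
    simp only [add_apply, smul_apply, smul_eq_mul, ContinuousLinearMap.proj_apply, hf, pderiv_mul,
      pderiv_X, Pi.single_apply, map_add, map_mul, eval_X, apply_ite (eval x), map_zero,
      mul_ite, mul_one, mul_zero, ite_mul, zero_mul, add_mul, Finset.sum_add_distrib,
      Finset.sum_ite_eq, Finset.mem_univ, if_true, Finset.mul_sum]
    exact (add_comm _ _).trans (congrArg (· + _) (Finset.sum_congr rfl fun i _ => by ring))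

end Calculus

end MvPolynomial

open MvPolynomial

theorem pd3_eval (q : MvPolynomial (Fin 3) ℝ) (i : Fin 3) (x : Fin 3 → ℝ) :
    pd3 (fun y => eval y q) i x = eval x (pderiv i q) := by
  simp [pd3, fderiv_eval_apply, Pi.single_apply]

theorem grad3_eval (q : MvPolynomial (Fin 3) ℝ) (x : Fin 3 → ℝ) :
    grad3 (fun y => eval y q) x = fun i => eval x (pderiv i q) :=
  funext fun i => pd3_eval q i x

theorem curl3_eq_zero_iff (u : (Fin 3 → ℝ) → (Fin 3 → ℝ)) (x : Fin 3 → ℝ) :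
    curl3 u x = 0 ↔ ∀ i j, pd3 (fun y => u y j) i x = pd3 (fun y => u y i) j x := by
  simp only [curl3, funext_iff, Pi.zero_apply, Fin.forall_fin_succ, Matrix.cons_val_zero,
    Matrix.cons_val_succ, Matrix.cons_val_fin_one, Fin.succ_zero_eq_one, Fin.succ_one_eq_two,
    IsEmpty.forall_iff, sub_eq_zero, forall_const, and_true, true_and]
  grind

theorem curl3_eval_eq_zero_iff (r : Fin 3 → MvPolynomial (Fin 3) ℝ) :
    (∀ x, curl3 (fun y i => eval y (r i)) x = 0) ↔ ∀ i j, pderiv i (r j) = pderiv j (r i) := by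
  simp only [curl3_eq_zero_iff, pd3_eval, MvPolynomial.funext_iff]
  exact ⟨fun h i j x => h x i j, fun h x i j => h i j x⟩

theorem cross3_zero_left (b : Fin 3 → ℝ) : cross3 0 b = 0 := by
  ext i; fin_cases i <;> simp [cross3]

theorem mem_nedelecW1_of_isPolyVec3 {p : ℕ} {u : (Fin 3 → ℝ) → (Fin 3 → ℝ)}
    (hu : IsPolyVec3 p u) : u ∈ NedelecW1 p :=
  ⟨u, 0, hu, fun _ => ⟨0, by simp, by simp⟩, fun x => by simp [cross3_zero_left]⟩

theorem exists_eval_of_mem_nedelecW1 {p : ℕ} {u : (Fin 3 → ℝ) → (Fin 3 → ℝ)}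
    (hu : u ∈ NedelecW1 p) :
    ∃ r : Fin 3 → MvPolynomial (Fin 3) ℝ,
      (∀ x i, u x i = eval x (r i)) ∧ (∑ i, X i * r i).totalDegree ≤ p + 1 := by
  obtain ⟨P, Q, hP, hQ, hPQ⟩ := hu
  choose s hs_deg hs using hP
  choose t _ ht using hQ
  set r : Fin 3 → MvPolynomial (Fin 3) ℝ := ![s 0 + (t 1 * X 2 - t 2 * X 1),
    s 1 + (t 2 * X 0 - t 0 * X 2), s 2 + (t 0 * X 1 - t 1 * X 0)]
  have hdot_cross : ∑ i, X i * r i = ∑ i, X i * s i := by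
    simp only [r, Fin.sum_univ_three, Matrix.cons_val_zero, Matrix.cons_val_one, Matrix.cons_val]
    ring
  refine ⟨r, fun x i => ?_, hdot_cross ▸ totalDegree_sum_X_mul_le hs_deg⟩
  fin_cases i <;> simp [r, hPQ, cross3, hs, ht]

/-- `grad(P_{p+1}(ℝ³)) = {u ∈ W¹_p : curl u = 0}`. -/
theorem grad_poly_eq_kernel_curl (p : ℕ) :
    {u | ∃ f, IsPoly3 (p + 1) f ∧ ∀ x, u x = grad3 f x} =
      {u | u ∈ NedelecW1 p ∧ ∀ x, curl3 u x = 0} := by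
  ext u
  constructor
  · rintro ⟨f, ⟨q, hq, hf⟩, hu⟩
    obtain rfl : u = fun x i => eval x (pderiv i q) := by
      funext x
      rw [hu, funext hf, grad3_eval]
    refine ⟨mem_nedelecW1_of_isPolyVec3 fun i => ⟨pderiv i q, ?_, fun _ => rfl⟩, ?_⟩
    · exact (totalDegree_pderiv_le i q).trans (by omega)
    · exact (curl3_eval_eq_zero_iff _).mpr fun i j => pderiv_pderiv_comm i j q
  · rintro ⟨hW, hcurl⟩
    obtain ⟨r, hr, hdeg⟩ := exists_eval_of_mem_nedelecW1 hW
    obtain rfl : u = fun x i => eval x (r i) := funext fun x => funext (hr x)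
    have hsymm := (curl3_eval_eq_zero_iff r).mp hcurl
    refine ⟨fun x => eval x (eulerInv (∑ i, X i * r i)),
      ⟨_, (totalDegree_eulerInv_le _).trans hdeg, fun _ => rfl⟩, fun x => ?_⟩
    simp only [grad3_eval, pderiv_eulerInv_sum_X_mul hsymm]
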